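/- Let σ : ℝ → ℝ be given by an everywhere convergent power series σ(x) = ∑_{k=0}^∞ α_k x^k, and assume σ is not a polynomial. Then for every d ≥ 1, every compact set K ⊆ ℝ^d, every continuous function f : K → ℝ, and every ε > 0, there exists a shallow neural network g ∈ M_σ with sup_{x ∈ K} |f(x) − g(x)| ≤ ε. -/

import Mathlib

/-!
If `α k ≠ 0`, the `k`-th forward difference `∑ᵢ (-1)^(k-i) (k choose i) σ(i h t)` equals
`k! α k (h t)^k + O(h^(k+1))` uniformly for bounded `t`, so `t^k` is a uniform limit of networks
on compact sets. Since `σ` is not a polynomial, `α k ≠ 0` for infinitely many `k`; replacing `t`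
by `t + b` and reading off the coefficients of the polynomial `b ↦ (t + b)^k` then yields every
power of every affine function, hence also its exponential. Products of exponentials of affine
functions are again of this form, so they span a point-separating subalgebra of `C(K, ℝ)`, which
is dense by Stone–Weierstrass.
-/

open scoped BigOperators

/-- The class `M_σ` of shallow neural networks on `ℝ^d` with activation `σ`. -/
def Shallow (σ : ℝ → ℝ) (d : ℕ) : Set ((Fin d → ℝ) → ℝ) :=
  {f | ∃ (n : ℕ) (a : Fin n → ℝ) (w : Fin n → Fin d → ℝ) (b : Fin n → ℝ), 1 ≤ n ∧
    f = fun x => ∑ k, a k * σ ((∑ i, w k i * x i) + b k)}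

open Finset Nat fwdDiff

section FwdDiff

variable {M G : Type*} [AddCommMonoid M] [AddCommGroup G] (h : M)

theorem fwdDiff_iter_mem {S : AddSubgroup G} {f : M → G} {n : ℕ} {y : M}
    (hf : ∀ i ≤ n, f (y + i • h) ∈ S) : (Δ_[h])^[n] f y ∈ S := by
  rw [fwdDiff_iter_eq_sum_shift]
  exact S.sum_mem fun i hi => S.zsmul_mem (hf i (Nat.lt_succ_iff.mp (mem_range.mp hi))) _

theorem abs_fwdDiff_iter_le {f : M → ℝ} {n : ℕ} {y : M} {B : ℝ}
    (hf : ∀ i ≤ n, |f (y + i • h)| ≤ B) : |(Δ_[h])^[n] f y| ≤ 2 ^ n * B := by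
  have hchoose : (2 : ℝ) ^ n = ∑ i ∈ range (n + 1), (n.choose i : ℝ) := by
    exact_mod_cast (Nat.sum_range_choose n).symm
  rw [fwdDiff_iter_eq_sum_shift, hchoose, sum_mul]
  refine (abs_sum_le_sum_abs _ _).trans (sum_le_sum fun i hi => ?_)
  rw [zsmul_eq_mul, abs_mul]
  push_cast
  rw [abs_mul, abs_pow, abs_neg, abs_one, one_pow, one_mul, Nat.abs_cast]
  exact mul_le_mul_of_nonneg_left (hf i (Nat.lt_succ_iff.mp (mem_range.mp hi))) (by positivity)

end FwdDiff

theorem fwdDiff_iter_sum_range_succ_mul_pow {R : Type*} [CommRing R] (c : ℕ → R) (n : ℕ) (y : R) :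
    (Δ_[1])^[n] (fun t => ∑ j ∈ range (n + 1), c j * t ^ j) y = n ! * c n := by
  simp_rw [sum_range_succ]
  rw [show (fun t : R => ∑ j ∈ range n, c j * t ^ j + c n * t ^ n)
      = (fun t => ∑ j ∈ range n, c j * t ^ j) + c n • fun t => t ^ n from rfl,
    fwdDiff_iter_add, fwdDiff_iter_sum_mul_pow_eq_zero, fwdDiff_iter_const_smul,
    fwdDiff_iter_eq_factorial]
  simp [mul_comm]

section PowerSeries

variable {σ : ℝ → ℝ} {α : ℕ → ℝ}

theorem continuous_of_forall_hasSum_pow (hσ : ∀ x, HasSum (fun j => α j * x ^ j) (σ x)) :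
    Continuous σ := by
  set p := FormalMultilinearSeries.ofScalars ℝ α
  have hp : p.radius = ⊤ := p.radius_eq_top_of_summable_norm fun r => by
    simpa [p, FormalMultilinearSeries.ofScalars_norm, abs_mul] using (hσ r).summable.abs
  have hsum : p.sum = σ := funext fun x => by
    change FormalMultilinearSeries.ofScalarsSum α x = σ x
    simpa [FormalMultilinearSeries.ofScalars_sum_eq, smul_eq_mul] using (hσ x).tsum_eq
  rw [← hsum, ← continuousOn_univ]
  simpa [hp] using (p.hasFPowerSeriesOnBall (hp ▸ ENNReal.zero_lt_top)).continuousOn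

theorem exists_abs_sub_sum_range_le (hσ : ∀ x, HasSum (fun j => α j * x ^ j) (σ x)) (n : ℕ) :
    ∃ C, 0 ≤ C ∧ ∀ x, |x| ≤ 1 → |σ x - ∑ j ∈ range n, α j * x ^ j| ≤ C * |x| ^ n := by
  have habs : Summable fun j => |α (j + n)| := by
    simpa using (summable_nat_add_iff n).mpr (hσ 1).summable.abs
  refine ⟨∑' j, |α (j + n)|, tsum_nonneg fun j => abs_nonneg _, fun x hx => ?_⟩
  have htail : σ x - ∑ j ∈ range n, α j * x ^ j = x ^ n * ∑' j, α (j + n) * x ^ j := by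
    rw [← (hσ x).tsum_eq, ← (hσ x).summable.sum_add_tsum_nat_add n, add_sub_cancel_left,
      ← tsum_mul_left]
    exact tsum_congr fun j => by ring
  have hterm : ∀ j, ‖α (j + n) * x ^ j‖ ≤ |α (j + n)| := fun j => by
    rw [Real.norm_eq_abs, abs_mul, abs_pow]
    exact mul_le_of_le_one_right (abs_nonneg _) (pow_le_one₀ (abs_nonneg x) hx)
  rw [htail, abs_mul, abs_pow, mul_comm]
  gcongr
  exact tsum_of_norm_bounded habs.hasSum hterm

theorem infinite_setOf_coeff_ne_zero (hσ : ∀ x, HasSum (fun j => α j * x ^ j) (σ x))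
    (hnp : ¬∃ p : Polynomial ℝ, ∀ x, σ x = p.eval x) : {k | α k ≠ 0}.Infinite := by
  intro hfin
  obtain ⟨N, hN⟩ := hfin.bddAbove
  refine hnp ⟨∑ k ∈ range (N + 1), Polynomial.C (α k) * Polynomial.X ^ k, fun x => ?_⟩
  rw [(hσ x).unique (hasSum_sum_of_ne_finset_zero (s := range (N + 1)) fun k hk => ?_)]
  · simp [Polynomial.eval_finsetSum]
  · have hk0 : α k = 0 := by
      by_contra hne
      exact hk (mem_range.mpr (Nat.lt_succ_of_le (hN hne)))
    rw [hk0, zero_mul]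

theorem exists_abs_fwdDiff_iter_comp_mul_sub_le (hσ : ∀ x, HasSum (fun j => α j * x ^ j) (σ x))
    (k : ℕ) :
    ∃ C, 0 ≤ C ∧ ∀ u : ℝ, k * |u| ≤ 1 →
      |(Δ_[1])^[k] (fun t => σ (t * u)) 0 - k ! * α k * u ^ k| ≤ C * |u| ^ (k + 1) := by
  obtain ⟨C, hC0, hC⟩ := exists_abs_sub_sum_range_le hσ (k + 1)
  refine ⟨2 ^ k * (C * k ^ (k + 1)), by positivity, fun u hu => ?_⟩
  set τ := fun x => σ x - ∑ j ∈ range (k + 1), α j * x ^ j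
  have hsplit : (fun t => σ (t * u))
      = (fun t => ∑ j ∈ range (k + 1), (α j * u ^ j) * t ^ j) + fun t => τ (t * u) := by
    ext t
    simp only [τ, Pi.add_apply]
    rw [sum_congr rfl fun (j : ℕ) _ => show α j * u ^ j * t ^ j = α j * (t * u) ^ j by ring]
    ring
  rw [hsplit, fwdDiff_iter_add, Pi.add_apply, fwdDiff_iter_sum_range_succ_mul_pow, ← mul_assoc,
    add_sub_cancel_left]
  calc |(Δ_[1])^[k] (fun t => τ (t * u)) 0| ≤ 2 ^ k * (C * (k * |u|) ^ (k + 1)) := by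
        refine abs_fwdDiff_iter_le 1 fun i hi => ?_
        have hiu : |i * u| ≤ k * |u| := by
          rw [abs_mul, Nat.abs_cast]
          gcongr
        simp only [zero_add, nsmul_eq_mul, mul_one]
        exact (hC _ (hiu.trans hu)).trans (by gcongr)
    _ = 2 ^ k * (C * k ^ (k + 1)) * |u| ^ (k + 1) := by ring

theorem exists_abs_fwdDiff_iter_scale_sub_pow_le (hσ : ∀ x, HasSum (fun j => α j * x ^ j) (σ x))
    {k : ℕ} (hk : α k ≠ 0) (R : ℝ) {δ : ℝ} (hδ : 0 < δ) : ∃ h > 0, ∀ s, |s| ≤ R →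
      |(k ! * α k * h ^ k)⁻¹ * (Δ_[1])^[k] (fun t => σ (t * (h * s))) 0 - s ^ k| ≤ δ := by
  obtain ⟨C, hC0, hC⟩ := exists_abs_fwdDiff_iter_comp_mul_sub_le hσ k
  set M := C * |R| ^ (k + 1) / (k ! * |α k|) with hM
  have hM0 : 0 ≤ M := by positivity
  set h := min (1 / (k * |R| + 1)) (δ / (M + 1))
  have hh0 : 0 < h := lt_min (by positivity) (by positivity)
  refine ⟨h, hh0, fun s hs => ?_⟩
  have hsR : |s| ≤ |R| := hs.trans (le_abs_self R)
  have hsmall : k * |h * s| ≤ 1 := by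
    calc k * |h * s| = h * (k * |s|) := by rw [abs_mul, abs_of_pos hh0]; ring
      _ ≤ 1 / (k * |R| + 1) * (k * |R| + 1) := by
        gcongr
        exacts [min_le_left _ _, by linarith [mul_le_mul_of_nonneg_left hsR (Nat.cast_nonneg k)]]
      _ = 1 := by field_simp
  have herr : (k ! * α k * h ^ k)⁻¹ * (Δ_[1])^[k] (fun t => σ (t * (h * s))) 0 - s ^ k
      = (k ! * α k * h ^ k)⁻¹ *
        ((Δ_[1])^[k] (fun t => σ (t * (h * s))) 0 - k ! * α k * (h * s) ^ k) := by
    have hc : (k ! * α k * h ^ k : ℝ) ≠ 0 := by positivity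
    rw [mul_pow, ← mul_assoc, mul_sub, inv_mul_cancel_left₀ hc]
  calc |(k ! * α k * h ^ k)⁻¹ * (Δ_[1])^[k] (fun t => σ (t * (h * s))) 0 - s ^ k|
      ≤ (k ! * |α k| * h ^ k)⁻¹ * (C * |h * s| ^ (k + 1)) := by
        rw [herr, abs_mul, abs_inv, abs_mul, abs_mul, abs_pow, abs_of_pos hh0, Nat.abs_cast]
        gcongr
        exact hC _ hsmall
    _ = h * (C * |s| ^ (k + 1) / (k ! * |α k|)) := by
        rw [abs_mul, abs_of_pos hh0]
        field_simp
        ring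
    _ ≤ δ / (M + 1) * (M + 1) := by
        gcongr
        · exact min_le_right _ _
        · have hsM : C * |s| ^ (k + 1) / (k ! * |α k|) ≤ M := by rw [hM]; gcongr
          linarith
    _ = δ := by field_simp

end PowerSeries

theorem Submodule.mem_of_forall_sum_pow_smul_mem {𝕜 E : Type*} [Field 𝕜] [Infinite 𝕜]
    [AddCommGroup E] [Module 𝕜 E] (V : Submodule 𝕜 E) {v : ℕ → E} {n : ℕ}
    (hv : ∀ b : 𝕜, ∑ j ∈ range n, b ^ j • v j ∈ V) {i : ℕ} (hi : i < n) : v i ∈ V := by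
  rw [← Submodule.Quotient.mk_eq_zero, ← Module.forall_dual_apply_eq_zero_iff 𝕜]
  intro f
  set p : Polynomial 𝕜 := ∑ j ∈ range n, Polynomial.C (f (V.mkQ (v j))) * Polynomial.X ^ j
  have hp : p = 0 := Polynomial.funext fun b => by
    have h0 : V.mkQ (∑ j ∈ range n, b ^ j • v j) = 0 := (Submodule.Quotient.mk_eq_zero V).mpr (hv b)
    calc p.eval b = f (V.mkQ (∑ j ∈ range n, b ^ j • v j)) := by
          simp only [p, Polynomial.eval_finsetSum, Polynomial.eval_mul, Polynomial.eval_C,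
            Polynomial.eval_pow, Polynomial.eval_X, map_sum, map_smul, smul_eq_mul, mul_comm]
      _ = Polynomial.eval b 0 := by rw [h0, map_zero, Polynomial.eval_zero]
  simpa [p, Polynomial.finsetSum_coeff, Polynomial.coeff_C_mul_X_pow, hi] using
    congrArg (Polynomial.coeff · i) hp

theorem NormedSpace.exp_mem_of_forall_pow_mem {𝕂 𝔸 : Type*} [RCLike 𝕂] [NormedRing 𝔸]
    [NormedAlgebra 𝕂 𝔸] [CompleteSpace 𝔸] (V : Submodule 𝕂 𝔸) (hV : IsClosed (V : Set 𝔸))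
    {x : 𝔸} (hx : ∀ n, x ^ n ∈ V) : NormedSpace.exp x ∈ V :=
  hV.mem_of_tendsto (NormedSpace.exp_series_hasSum_exp' (𝕂 := 𝕂) x).tendsto_sum_nat
    (Filter.Eventually.of_forall fun _ => V.sum_mem fun i _ => V.smul_mem _ (hx i))

section Ridge

variable {X : Type*} [TopologicalSpace X]

-- With `L` the affine functions `x ↦ ⟪w, x⟫ + b` on `K`, this is `M_σ` restricted to `K`.
def ridgeSpan (σ : C(ℝ, ℝ)) (L : Submodule ℝ C(X, ℝ)) : Submodule ℝ C(X, ℝ) :=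
  Submodule.span ℝ ((fun ℓ => σ.comp ℓ) '' (L : Set C(X, ℝ)))

def ridgeClosure (σ : C(ℝ, ℝ)) (L : Submodule ℝ C(X, ℝ)) : Submodule ℝ C(X, ℝ) :=
  (ridgeSpan σ L).topologicalClosure

variable [CompactSpace X] {σ : C(ℝ, ℝ)} {α : ℕ → ℝ} {L : Submodule ℝ C(X, ℝ)}

theorem mem_ridgeClosure_iff {f : C(X, ℝ)} :
    f ∈ ridgeClosure σ L ↔ ∀ ε > 0, ∃ g ∈ ridgeSpan σ L, dist f g < ε := by
  rw [ridgeClosure, ← SetLike.mem_coe, Submodule.topologicalClosure_coe, Metric.mem_closure_iff]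
  rfl

theorem pow_mem_ridgeClosure_of_coeff_ne_zero (hσ : ∀ x, HasSum (fun j => α j * x ^ j) (σ x))
    {k : ℕ} (hk : α k ≠ 0) {ℓ : C(X, ℝ)} (hℓ : ℓ ∈ L) : ℓ ^ k ∈ ridgeClosure σ L := by
  refine mem_ridgeClosure_iff.mpr fun ε hε => ?_
  obtain ⟨h, -, hh⟩ := exists_abs_fwdDiff_iter_scale_sub_pow_le hσ hk ‖ℓ‖ (half_pos hε)
  refine ⟨(k ! * α k * h ^ k)⁻¹ • (Δ_[1])^[k] (fun t : ℝ => σ.comp (t • h • ℓ)) 0, ?_, ?_⟩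
  · exact Submodule.smul_mem _ _ (fwdDiff_iter_mem (S := (ridgeSpan σ L).toAddSubgroup) 1 fun i _ =>
      Submodule.subset_span ⟨_, L.smul_mem _ (L.smul_mem h hℓ), rfl⟩)
  refine lt_of_le_of_lt ((ContinuousMap.dist_le (half_pos hε).le).mpr fun x => ?_)
    (half_lt_self hε)
  have heval : ((Δ_[1])^[k] (fun t : ℝ => σ.comp (t • h • ℓ)) 0) x
      = (Δ_[1])^[k] (fun t => σ (t * (h * ℓ x))) 0 := by
    simp [fwdDiff_iter_eq_sum_shift]
  rw [Real.dist_eq, abs_sub_comm, ContinuousMap.smul_apply, heval, smul_eq_mul,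
    ContinuousMap.pow_apply]
  exact hh _ (ContinuousMap.norm_coe_le_norm ℓ x)

theorem pow_mem_ridgeClosure (hσ : ∀ x, HasSum (fun j => α j * x ^ j) (σ x))
    (hα : {k | α k ≠ 0}.Infinite) (hL : (1 : C(X, ℝ)) ∈ L) {ℓ : C(X, ℝ)} (hℓ : ℓ ∈ L) (m : ℕ) :
    ℓ ^ m ∈ ridgeClosure σ L := by
  obtain ⟨k, hk, hmk⟩ := hα.exists_gt m
  have hshift (b : ℝ) :
      ∑ i ∈ range (k + 1), b ^ i • ((k.choose i : ℝ) • ℓ ^ (k - i)) ∈ ridgeClosure σ L := by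
    have := pow_mem_ridgeClosure_of_coeff_ne_zero hσ hk (L.add_mem (L.smul_mem b hL) hℓ)
    rw [(Commute.all _ _).add_pow] at this
    convert this using 2 with i
    rw [smul_pow, one_pow, smul_mul_assoc, one_mul, ← nsmul_eq_mul', ← Nat.cast_smul_eq_nsmul ℝ,
      smul_smul, smul_smul, mul_comm]
  have := (ridgeClosure σ L).mem_of_forall_sum_pow_smul_mem hshift (i := k - m) (by omega)
  have hchoose : (k.choose (k - m) : ℝ) ≠ 0 := Nat.cast_ne_zero.mpr (Nat.choose_pos (by omega)).ne'
  rwa [Nat.sub_sub_self hmk.le, Submodule.smul_mem_iff _ hchoose] at this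

theorem ridgeClosure_eq_top (hσ : ∀ x, HasSum (fun j => α j * x ^ j) (σ x))
    (hα : {k | α k ≠ 0}.Infinite) (hL : (1 : C(X, ℝ)) ∈ L)
    (hsep : ∀ x y : X, x ≠ y → ∃ ℓ ∈ L, ℓ x ≠ ℓ y) : ridgeClosure σ L = ⊤ := by
  set E := NormedSpace.exp '' (L : Set C(X, ℝ))
  have hE : (Submonoid.closure E : Set C(X, ℝ)) ⊆ E := fun f hf => by
    induction hf using Submonoid.closure_induction with
    | mem f hf => exact hf
    | one => exact ⟨0, L.zero_mem, NormedSpace.exp_zero⟩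
    | mul f g _ _ hf hg =>
      obtain ⟨ℓ, hℓ, rfl⟩ := hf
      obtain ⟨ℓ', hℓ', rfl⟩ := hg
      exact ⟨ℓ + ℓ', L.add_mem hℓ hℓ', NormedSpace.exp_add⟩
  have hA : (Algebra.adjoin ℝ E : Set C(X, ℝ)) ⊆ ridgeClosure σ L := by
    rw [← Subalgebra.coe_toSubmodule, Algebra.adjoin_eq_span, SetLike.coe_subset_coe,
      Submodule.span_le]
    rintro _ hf
    obtain ⟨ℓ, hℓ, rfl⟩ := hE hf
    exact NormedSpace.exp_mem_of_forall_pow_mem (𝕂 := ℝ) _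
      (Submodule.isClosed_topologicalClosure _) (pow_mem_ridgeClosure hσ hα hL hℓ)
  have hexp (ℓ : C(X, ℝ)) (x : X) : NormedSpace.exp ℓ x = Real.exp (ℓ x) := by
    rw [Real.exp_eq_exp_ℝ]
    exact NormedSpace.map_exp (ContinuousMap.evalAlgHom ℝ ℝ x) (continuous_eval_const x) ℓ
  have hAsep : (Algebra.adjoin ℝ E).SeparatesPoints := fun x y hxy => by
    obtain ⟨ℓ, hℓ, hne⟩ := hsep x y hxy
    exact ⟨_, ⟨_, Algebra.subset_adjoin ⟨ℓ, hℓ, rfl⟩, rfl⟩, by simpa [hexp] using hne⟩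
  have hdense := ContinuousMap.subalgebra_topologicalClosure_eq_top_of_separatesPoints _ hAsep
  refine eq_top_iff.mpr fun f _ => closure_minimal hA (Submodule.isClosed_topologicalClosure _) ?_
  rw [← Subalgebra.topologicalClosure_coe, hdense]
  trivial

end Ridge

def affineFunctions {d : ℕ} (K : Set (Fin d → ℝ)) : Submodule ℝ C(K, ℝ) where
  carrier := {ℓ | ∃ (w : Fin d → ℝ) (b : ℝ), ∀ x : K, ℓ x = ∑ i, w i * (x : Fin d → ℝ) i + b}
  add_mem' := by
    rintro _ _ ⟨w, b, h⟩ ⟨w', b', h'⟩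
    refine ⟨w + w', b + b', fun x => ?_⟩
    simp only [ContinuousMap.add_apply, h, h', Pi.add_apply, add_mul, sum_add_distrib]
    ring
  zero_mem' := ⟨0, 0, fun x => by simp⟩
  smul_mem' := by
    rintro c _ ⟨w, b, h⟩
    refine ⟨c • w, c * b, fun x => ?_⟩
    simp only [ContinuousMap.smul_apply, h, smul_eq_mul, Pi.smul_apply, mul_add, mul_sum, mul_assoc]

theorem one_mem_affineFunctions {d : ℕ} (K : Set (Fin d → ℝ)) : (1 : C(K, ℝ)) ∈ affineFunctions K :=
  ⟨0, 1, fun x => by simp⟩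

theorem affineFunctions_separatesPoints {d : ℕ} (K : Set (Fin d → ℝ)) (x y : K) (hxy : x ≠ y) :
    ∃ ℓ ∈ affineFunctions K, ℓ x ≠ ℓ y := by
  obtain ⟨i, hi⟩ := Function.ne_iff.mp (Subtype.coe_injective.ne hxy)
  refine ⟨⟨fun z => (z : Fin d → ℝ) i, (continuous_apply i).comp continuous_subtype_val⟩,
    ⟨Pi.single i 1, 0, fun z => ?_⟩, hi⟩
  simp [Pi.single_apply]

namespace Shallow

variable {σ : ℝ → ℝ} {d : ℕ}

theorem neuron_mem (w : Fin d → ℝ) (b : ℝ) :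
    (fun x => σ (∑ i, w i * x i + b)) ∈ Shallow σ d :=
  ⟨1, fun _ => 1, fun _ => w, fun _ => b, le_rfl, by simp⟩

theorem smul_mem (c : ℝ) {g : (Fin d → ℝ) → ℝ} (hg : g ∈ Shallow σ d) : c • g ∈ Shallow σ d := by
  obtain ⟨n, a, w, b, hn, rfl⟩ := hg
  refine ⟨n, c • a, w, b, hn, funext fun x => ?_⟩
  simp [mul_sum, mul_assoc]

theorem add_mem {g g' : (Fin d → ℝ) → ℝ} (hg : g ∈ Shallow σ d) (hg' : g' ∈ Shallow σ d) :
    g + g' ∈ Shallow σ d := by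
  obtain ⟨n, a, w, b, hn, rfl⟩ := hg
  obtain ⟨n', a', w', b', -, rfl⟩ := hg'
  refine ⟨n + n', Fin.append a a', Fin.append w w', Fin.append b b', by omega, funext fun x => ?_⟩
  simp [Fin.sum_univ_add]

end Shallow

theorem exists_shallow_eq_of_mem_ridgeSpan {σ : C(ℝ, ℝ)} {d : ℕ} {K : Set (Fin d → ℝ)}
    {g : C(K, ℝ)} (hg : g ∈ ridgeSpan σ (affineFunctions K)) :
    ∃ N ∈ Shallow σ d, ∀ x : K, g x = N x := by
  induction hg using Submodule.span_induction with
  | mem _ hg =>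
    obtain ⟨ℓ, ⟨w, b, hℓ⟩, rfl⟩ := hg
    exact ⟨_, Shallow.neuron_mem w b, fun x => by simp [hℓ]⟩
  | zero => exact ⟨_, Shallow.smul_mem 0 (Shallow.neuron_mem 0 0), fun x => by simp⟩
  | add _ _ _ _ hg hg' =>
    obtain ⟨N, hN, hgN⟩ := hg
    obtain ⟨N', hN', hgN'⟩ := hg'
    exact ⟨_, Shallow.add_mem hN hN', fun x => by simp [hgN, hgN']⟩
  | smul c _ _ hg =>
    obtain ⟨N, hN, hgN⟩ := hg
    exact ⟨_, Shallow.smul_mem c hN, fun x => by simp [hgN]⟩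

theorem shallow_universal_approximation_general (σ : ℝ → ℝ) (α : ℕ → ℝ)
    (hσ : ∀ x : ℝ, HasSum (fun k : ℕ => α k * x ^ k) (σ x))
    (hnp : ¬∃ p : Polynomial ℝ, ∀ x : ℝ, σ x = p.eval x)
    (d : ℕ) (K : Set (Fin d → ℝ)) (hK : IsCompact K)
    (f : (Fin d → ℝ) → ℝ) (hf : ContinuousOn f K) (ε : ℝ) (hε : 0 < ε) :
    ∃ g ∈ Shallow σ d, ∀ x ∈ K, |f x - g x| ≤ ε := by
  have : CompactSpace K := isCompact_iff_compactSpace.mp hK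
  let σc : C(ℝ, ℝ) := ⟨σ, continuous_of_forall_hasSum_pow hσ⟩
  have hdense : ridgeClosure σc (affineFunctions K) = ⊤ :=
    ridgeClosure_eq_top (σ := σc) hσ (infinite_setOf_coeff_ne_zero hσ hnp)
      (one_mem_affineFunctions K) (affineFunctions_separatesPoints K)
  have hfK : (⟨K.domRestrict f, hf.domRestrict⟩ : C(K, ℝ)) ∈ ridgeClosure σc (affineFunctions K) :=
    hdense ▸ Submodule.mem_top
  obtain ⟨g, hg, hfg⟩ := mem_ridgeClosure_iff.mp hfK ε hε
  obtain ⟨N, hN, hgN⟩ := exists_shallow_eq_of_mem_ridgeSpan hg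
  refine ⟨N, hN, fun x hx => ?_⟩
  rw [← hgN ⟨x, hx⟩]
  exact (ContinuousMap.dist_apply_le_dist ⟨x, hx⟩).trans hfg.le

/-- Universal approximation for shallow real networks with a non-polynomial activation given by
an everywhere convergent power series: every continuous function on a compact set `K ⊆ ℝ^d` can
be approximated uniformly on `K` to accuracy `ε` by some `g ∈ M_σ`. -/
theorem shallow_universal_approximation (σ : ℝ → ℝ) (α : ℕ → ℝ)
    (hσ : ∀ x : ℝ, HasSum (fun k : ℕ => α k * x ^ k) (σ x))
    (hnp : ¬∃ p : Polynomial ℝ, ∀ x : ℝ, σ x = p.eval x)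
    (d : ℕ) (hd : 1 ≤ d) (K : Set (Fin d → ℝ)) (hK : IsCompact K)
    (f : (Fin d → ℝ) → ℝ) (hf : ContinuousOn f K) (ε : ℝ) (hε : 0 < ε) :
    ∃ g ∈ Shallow σ d, ∀ x ∈ K, |f x - g x| ≤ ε :=
  shallow_universal_approximation_general σ α hσ hnp d K hK f hf ε hε
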